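/- arXiv:2310.15668 — 2 statements merged into one kernel-verified Lean document; each statement's English description precedes it below -/
import Mathlib

section
/- Let Λ be a finite set with |Λ| ≥ 1 and let J_1, …, J_M be 3-element subsets of Λ such that any two distinct sets J_j, J_{j'} share at most one element (as holds for the hyperwedge sets of distinct closed h-motif instances). Let Y_1, …, Y_r (r ≥ 1) be independent uniform random samples from Λ and define M̂ := (|Λ|/(3r)) · Σ_{i=1}^{r} Σ_{j=1}^{M} 1[Y_i ∈ J_j]. For n ∈ {0,1}, let q_n be the number of ordered pairs (j, j') with j ≠ j' and |J_j ∩ J_{j'}| = n. Then Var[M̂] = (1/(3r)) · M · (|Λ| − 3) + (1/(9r)) · Σ_{n=0}^{1} q_n · (n·|Λ| − 9). (Theorem 5, variance of MoCHy-A⁺ for closed h-motifs.) -/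
/-!
Write `c b` for the number of sets `J j` containing `b`, so that `M̂ = |Λ|/(3r) · ∑ᵢ c(Yᵢ)`.
The `c(Yᵢ)` are i.i.d., hence `Var M̂ = (|Λ|/(3r))² · r · (E[c²] − E[c]²)`. Double counting gives
`∑_b c b = 3M` and `∑_b (c b)² = ∑_{j,j'} |J_j ∩ J_j'| = 3M + q₁`, and since two distinct sets
meet in at most one element, `q₀ + q₁ = M² − M`.
-/

open Finset
open scoped BigOperators

lemma expect_sub_expect_sq {β K : Type*} [Fintype β] [Nonempty β] [Field K] [CharZero K]
    (f : β → K) : 𝔼 b, (f b - 𝔼 b', f b') ^ 2 = 𝔼 b, f b ^ 2 - (𝔼 b, f b) ^ 2 := by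
  simp_rw [sub_sq, expect_add_distrib, expect_sub_distrib, ← expect_mul, ← mul_expect]
  simp
  ring

section UniformProduct

variable {ι β : Type*} [Fintype ι] [DecidableEq ι] [Fintype β]

lemma sum_comp_eval {R : Type*} [CommSemiring R] (i : ι) (f : β → R) :
    ∑ y : ι → β, f (y i) = Fintype.card β ^ (Fintype.card ι - 1) * ∑ b, f b := by
  rw [← (Equiv.funSplitAt i β).symm.sum_comp, Fintype.sum_prod_type]
  simp [Equiv.funSplitAt_symm_apply, Fintype.card_subtype_compl, mul_sum]

lemma sum_mul_comp_eval_eq_zero {R : Type*} [CommSemiring R] {i j : ι} (hij : i ≠ j)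
    {f : β → R} (hf : ∑ b, f b = 0) (g : β → R) : ∑ y : ι → β, f (y i) * g (y j) = 0 := by
  rw [← (Equiv.funSplitAt i β).symm.sum_comp, Fintype.sum_prod_type]
  simp [Equiv.funSplitAt_symm_apply, hij.symm, ← sum_mul_sum, hf]

variable {K : Type*} [Field K] [CharZero K] [Nonempty β]

lemma expect_comp_eval (i : ι) (f : β → K) : 𝔼 y : ι → β, f (y i) = 𝔼 b, f b := by
  obtain ⟨n, hn⟩ : ∃ n, Fintype.card ι = n + 1 :=
    ⟨_, (Nat.succ_pred_eq_of_pos (Fintype.card_pos_iff.2 ⟨i⟩)).symm⟩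
  have hβ : (Fintype.card β : K) ≠ 0 := Nat.cast_ne_zero.2 Fintype.card_ne_zero
  rw [Fintype.expect_eq_sum_div_card, Fintype.expect_eq_sum_div_card, sum_comp_eval,
    Fintype.card_fun, Nat.cast_pow, hn, Nat.add_sub_cancel, pow_succ,
    mul_div_mul_left _ _ (pow_ne_zero _ hβ)]

lemma expect_mul_comp_eval_eq_zero {i j : ι} (hij : i ≠ j) {f : β → K}
    (hf : 𝔼 b, f b = 0) (g : β → K) : 𝔼 y : ι → β, f (y i) * g (y j) = 0 := by
  have hsum : ∑ b, f b = 0 := by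
    simpa [Fintype.expect_eq_sum_div_card, Fintype.card_ne_zero] using hf
  simp [Fintype.expect_eq_sum_div_card, sum_mul_comp_eval_eq_zero hij hsum]

lemma expect_sum_comp_eval (f : β → K) :
    𝔼 y : ι → β, ∑ i, f (y i) = Fintype.card ι * 𝔼 b, f b := by
  simp [expect_sum_comm, expect_comp_eval]

lemma expect_sq_sum_comp_eval_sub (f : β → K) :
    𝔼 y : ι → β, (∑ i, f (y i) - Fintype.card ι * 𝔼 b, f b) ^ 2
      = Fintype.card ι * 𝔼 b, (f b - 𝔼 b', f b') ^ 2 := by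
  set h : β → K := fun b ↦ f b - 𝔼 b', f b'
  have hh : 𝔼 b, h b = 0 := by simp [h, expect_sub_distrib]
  have hcross (i j : ι) : 𝔼 y : ι → β, h (y i) * h (y j) = if i = j then 𝔼 b, h b ^ 2 else 0 := by
    split_ifs with hij
    · subst hij
      simpa only [← sq] using expect_comp_eval i (h · ^ 2)
    · exact expect_mul_comp_eval_eq_zero hij hh h
  have hdev (y : ι → β) : ∑ i, f (y i) - Fintype.card ι * 𝔼 b, f b = ∑ i, h (y i) := by
    simp [h, sum_sub_distrib]
  simp_rw [hdev, sq (∑ i, _), sum_mul_sum, expect_sum_comm, hcross]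
  simp [h]

lemma expect_sq_mul_sum_comp_eval_sub (c : K) (f : β → K) :
    𝔼 y : ι → β, (c * ∑ i, f (y i) - 𝔼 y' : ι → β, c * ∑ i, f (y' i)) ^ 2
      = c ^ 2 * (Fintype.card ι * (𝔼 b, f b ^ 2 - (𝔼 b, f b) ^ 2)) := by
  simp_rw [← mul_expect, expect_sum_comp_eval, ← mul_sub, mul_pow, ← mul_expect,
    expect_sq_sum_comp_eval_sub, expect_sub_expect_sq]

end UniformProduct

lemma sum_eq_card_filter_eq_one {α : Type*} {s : Finset α} {f : α → ℕ} (hf : ∀ x ∈ s, f x ≤ 1) :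
    ∑ x ∈ s, f x = #{x ∈ s | f x = 1} := by
  rw [card_filter (fun x ↦ f x = 1)]
  refine sum_congr rfl fun x hx ↦ ?_
  have := hf x hx
  interval_cases f x <;> simp

lemma card_filter_eq_zero_add_card_filter_eq_one {α : Type*} {s : Finset α} {f : α → ℕ}
    (hf : ∀ x ∈ s, f x ≤ 1) : #{x ∈ s | f x = 0} + #{x ∈ s | f x = 1} = #s := by
  have hzero : {x ∈ s | f x = 0} = {x ∈ s | ¬f x = 1} :=
    filter_congr fun x hx ↦ by have := hf x hx; omega
  rw [hzero, add_comm, card_filter_add_card_filter_not]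

section SetFamily

variable {ι β : Type*} [Fintype ι] [DecidableEq β] (J : ι → Finset β)

def coverCount (b : β) : ℕ := #{j | b ∈ J j}

def pairCount (n : ℕ) : ℕ := #{p ∈ (univ : Finset ι).offDiag | #(J p.1 ∩ J p.2) = n}

lemma pairCount_eq_natCard [DecidableEq ι] (n : ℕ) :
    pairCount J n = Nat.card {p : ι × ι // p.1 ≠ p.2 ∧ #(J p.1 ∩ J p.2) = n} := by
  rw [Nat.card_eq_fintype_card, Fintype.card_subtype, pairCount]
  congr 1
  ext p
  simp

variable {J}

lemma pairCount_zero_add_pairCount_one (hshare : ∀ j j', j ≠ j' → #(J j ∩ J j') ≤ 1) :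
    pairCount J 0 + pairCount J 1 + Fintype.card ι = Fintype.card ι ^ 2 := by
  have := card_filter_eq_zero_add_card_filter_eq_one (s := (univ : Finset ι).offDiag)
    (f := fun p ↦ #(J p.1 ∩ J p.2)) fun p hp ↦ hshare _ _ (mem_offDiag.1 hp).2.2
  rw [offDiag_card, card_univ] at this
  rw [pairCount, pairCount, this, sq, Nat.sub_add_cancel (Nat.le_mul_self _)]

lemma sum_sum_card_inter [DecidableEq ι] {k : ℕ} (hcard : ∀ j, #(J j) = k)
    (hshare : ∀ j j', j ≠ j' → #(J j ∩ J j') ≤ 1) :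
    ∑ j, ∑ j', #(J j ∩ J j') = k * Fintype.card ι + pairCount J 1 := by
  rw [← sum_product', ← diag_union_offDiag, sum_union (disjoint_diag_offDiag _),
    sum_diag, sum_eq_card_filter_eq_one fun p hp ↦ hshare _ _ (mem_offDiag.1 hp).2.2]
  simp [hcard, mul_comm, pairCount]

variable [Fintype β]

lemma sum_coverCount {k : ℕ} (hcard : ∀ j, #(J j) = k) :
    ∑ b, coverCount J b = k * Fintype.card ι := by
  simp_rw [coverCount, card_filter, sum_comm (s := (univ : Finset β)), sum_boole]
  simp [hcard, mul_comm]

lemma sum_coverCount_sq : ∑ b, coverCount J b ^ 2 = ∑ j, ∑ j', #(J j ∩ J j') := by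
  simp_rw [coverCount, card_filter, sq, sum_mul_sum, ite_zero_mul_ite_zero, one_mul, ← mem_inter]
  rw [sum_comm]
  simp_rw [sum_comm (s := (univ : Finset β)), sum_boole, filter_mem_eq_inter, univ_inter,
    Nat.cast_id]

end SetFamily

/-- **Theorem 5 (variance of MoCHy-A⁺ for closed h-motifs).**
`β` is the finite hyperwedge set `Λ` (with `|Λ| ≥ 1`), `J 1, …, J M` are
3-element subsets of `Λ` such that any two distinct ones share at most one
element.  `est` is the estimator `M̂ = (|Λ|/(3r)) · Σᵢ Σⱼ 1[Yᵢ ∈ Jⱼ]`, the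
`r ≥ 1` i.i.d. uniform samples being encoded by the uniform distribution on
`Fin r → β`; `μ = E[M̂]` and `q n` is the number of ordered pairs `(j, j')`
with `j ≠ j'` and `|Jⱼ ∩ Jⱼ'| = n`.  Then
`Var[M̂] = (1/(3r))·M·(|Λ| − 3) + (1/(9r))·Σ_{n=0}^{1} q_n·(n·|Λ| − 9)`. -/
theorem mochyAplus_variance_closed {β : Type*} [Fintype β] [DecidableEq β] [Nonempty β]
    {M r : ℕ} (hr : 1 ≤ r)
    (J : Fin M → Finset β) (hcard : ∀ j, (J j).card = 3)
    (hshare : ∀ j j' : Fin M, j ≠ j' → (J j ∩ J j').card ≤ 1)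
    (est : (Fin r → β) → ℝ)
    (hest : ∀ y, est y = ((Fintype.card β : ℝ) / (3 * r)) *
        ∑ i : Fin r, ∑ j : Fin M, (if y i ∈ J j then (1 : ℝ) else 0))
    (μ : ℝ) (hμ : μ = (∑ y : Fin r → β, est y) / (Fintype.card β : ℝ) ^ r)
    (q : ℕ → ℕ)
    (hq : ∀ n, q n =
      Nat.card {jj : Fin M × Fin M // jj.1 ≠ jj.2 ∧ (J jj.1 ∩ J jj.2).card = n}) :
    (∑ y : Fin r → β, (est y - μ) ^ 2) / (Fintype.card β : ℝ) ^ r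
      = 1 / (3 * r) * M * ((Fintype.card β : ℝ) - 3)
        + 1 / (9 * r) *
            ∑ n ∈ Finset.range 2, (q n : ℝ) * (n * (Fintype.card β : ℝ) - 9) := by
  set N : ℝ := (Fintype.card β : ℝ)
  have hN : N ≠ 0 := Nat.cast_ne_zero.2 Fintype.card_ne_zero
  have hr0 : (r : ℝ) ≠ 0 := Nat.cast_ne_zero.2 (by omega)
  have huniform (F : (Fin r → β) → ℝ) : (∑ y, F y) / N ^ r = 𝔼 y, F y := by
    simp [Fintype.expect_eq_sum_div_card, N]
  set g : β → ℝ := fun b ↦ (coverCount J b : ℝ)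
  have hest' : est = fun y ↦ N / (3 * r) * ∑ i, g (y i) := by
    ext y
    simp only [hest, g, coverCount, natCast_card_filter]
  have hq_eq (n : ℕ) : q n = pairCount J n := by rw [hq, pairCount_eq_natCard]
  have hpairs : (q 0 : ℝ) + q 1 + M = M ^ 2 := by
    simpa [hq_eq] using congr((↑$(pairCount_zero_add_pairCount_one hshare) : ℝ))
  have hmean : 𝔼 b, g b = 3 * M / N := by
    rw [Fintype.expect_eq_sum_div_card]
    simpa [g] using congr((↑$(sum_coverCount hcard) : ℝ) / N)
  have hmean_sq : 𝔼 b, g b ^ 2 = (3 * M + q 1) / N := by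
    rw [Fintype.expect_eq_sum_div_card]
    simpa [g, sum_sum_card_inter hcard hshare, hq_eq]
      using congr((↑$(sum_coverCount_sq (J := J)) : ℝ) / N)
  simp_rw [hμ, huniform, hest', expect_sq_mul_sum_comp_eval_sub, Fintype.card_fin, hmean, hmean_sq,
    sum_range_succ, sum_range_zero]
  field_simp
  linear_combination 81 * hpairs
end

section
/- Let Λ be a finite set with |Λ| ≥ 1 and let J_1, …, J_M (M ≥ 1) be 2-element subsets of Λ. Suppose every element of Λ belongs to at most D of the sets J_1, …, J_M (D ≥ 1). Let Y_1, …, Y_r be independent uniform samples from Λ and M̂ := (|Λ|/(2r)) · Σ_{i=1}^{r} Σ_{j=1}^{M} 1[Y_i ∈ J_j]. Then for any ε, δ > 0, if r > (1/(8ε²)) · (|Λ|·D/M)² · log(2/δ), then Pr(|M̂ − M| ≥ M·ε) ≤ δ. (Theorem 7, concentration bound of MoCHy-A⁺ for open h-motifs; the paper instantiates D = d_max[t], the maximum number of adjacent hyperedges over all hyperedges occurring in instances of h-motif t.) -/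
open scoped Classical

open MeasureTheory ProbabilityTheory Real Finset

/-! A sampled hyperwedge `y` contributes `deg y`, the number of instances containing it, to the
raw count; `deg` takes values in `[0, D]`, and since every instance contains exactly two
hyperwedges, `∑ deg = 2M`, so the rescaled count is unbiased. Hoeffding's inequality for the
`r` i.i.d. bounded terms `deg (Y i)`, applied to both tails, gives the bound. -/

theorem measureReal_abs_sum_sub_integral_ge_le_of_iIndepFun {Ω ι : Type*} [MeasurableSpace Ω]
    {μ : Measure Ω} {X : ι → Ω → ℝ} (hindep : iIndepFun X μ) (hX : ∀ i, AEMeasurable (X i) μ)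
    {a b : ℝ} (hab : ∀ i, ∀ᵐ ω ∂μ, X i ω ∈ Set.Icc a b) (s : Finset ι) {t : ℝ} (ht : 0 ≤ t) :
    μ.real {ω | t ≤ |∑ i ∈ s, (X i ω - μ[X i])|} ≤
      2 * exp (-2 * t ^ 2 / (#s * (b - a) ^ 2)) := by
  have := hindep.isProbabilityMeasure
  set S : Ω → ℝ := fun ω ↦ ∑ i ∈ s, (X i ω - μ[X i])
  have hsubG : HasSubgaussianMGF S (∑ _i ∈ s, (‖b - a‖₊ / 2) ^ 2) μ :=
    HasSubgaussianMGF.sum_of_iIndepFun (X := fun i ω ↦ X i ω - μ[X i])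
      (by exact hindep.comp (fun i x ↦ x - μ[X i]) fun _ ↦ measurable_id.sub_const _)
      fun i _ ↦ hasSubgaussianMGF_of_mem_Icc (hX i) (hab i)
  have hvar : -t ^ 2 / (2 * ((∑ _i ∈ s, (‖b - a‖₊ / 2) ^ 2 : NNReal) : ℝ)) =
      -2 * t ^ 2 / (#s * (b - a) ^ 2) := by
    simp only [sum_const, nsmul_eq_mul, NNReal.coe_mul, NNReal.coe_natCast, NNReal.coe_pow,
      NNReal.coe_div, coe_nnnorm, Real.norm_eq_abs, sq_abs, NNReal.coe_ofNat, div_pow]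
    field_simp
  calc μ.real {ω | t ≤ |S ω|} ≤ μ.real ({ω | t ≤ S ω} ∪ {ω | t ≤ (-S) ω}) :=
        measureReal_mono fun ω (hω : t ≤ |S ω|) ↦ le_abs.1 hω
    _ ≤ exp (-2 * t ^ 2 / (#s * (b - a) ^ 2)) + exp (-2 * t ^ 2 / (#s * (b - a) ^ 2)) := by
        rw [← hvar]
        exact (measureReal_union_le _ _).trans
          (add_le_add (hsubG.measure_ge_le ht) (hsubG.neg.measure_ge_le ht))
    _ = _ := by ring

section UniformOn

variable {β : Type*} [Fintype β] [MeasurableSpace β] [MeasurableSingletonClass β]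

theorem measureReal_uniformOn_univ (s : Finset β) :
    (uniformOn Set.univ : Measure β).real s = #s / Fintype.card β := by
  simp [measureReal_def, uniformOn_univ, Measure.count_apply_finset, ENNReal.toReal_div]

theorem integral_uniformOn_univ (f : β → ℝ) :
    ∫ x, f x ∂(uniformOn Set.univ : Measure β) = (∑ x, f x) / Fintype.card β := by
  rw [integral_fintype (.of_finite), sum_div]
  refine sum_congr rfl fun x _ ↦ ?_
  rw [← coe_singleton, measureReal_uniformOn_univ]
  simp [div_eq_inv_mul]

theorem uniformOn_univ_pi (ι : Type*) [Fintype ι] :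
    (uniformOn Set.univ : Measure (ι → β)) = Measure.pi fun _ ↦ uniformOn Set.univ := by
  rw [← uniformOn_pi, Set.pi_univ]

end UniformOn

theorem two_mul_exp_neg_le {c δ : ℝ} (hδ : 0 < δ) (h : log (2 / δ) ≤ c) : 2 * exp (-c) ≤ δ := by
  calc 2 * exp (-c) ≤ 2 * exp (-log (2 / δ)) := by gcongr
    _ = δ := by rw [exp_neg, exp_log (by positivity), inv_div]; field_simp

theorem card_abs_sum_sub_mean_ge_le {β : Type*} [Fintype β] [Nonempty β] (r : ℕ) (f : β → ℝ)
    {a b : ℝ} (hf : ∀ x, f x ∈ Set.Icc a b) {t : ℝ} (ht : 0 ≤ t) :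
    (#{y : Fin r → β | t ≤ |∑ i, f (y i) - r * ((∑ x, f x) / Fintype.card β)|} : ℝ) ≤
      2 * Fintype.card β ^ r * exp (-2 * t ^ 2 / (r * (b - a) ^ 2)) := by
  let : MeasurableSpace β := ⊤
  set μ : Measure (Fin r → β) := uniformOn Set.univ
  have hμ : μ = Measure.pi fun _ ↦ uniformOn Set.univ := uniformOn_univ_pi (Fin r)
  have hmean (i : Fin r) : μ[fun y ↦ f (y i)] = (∑ x, f x) / Fintype.card β := by
    rw [hμ, ← integral_uniformOn_univ, ← integral_map (measurable_pi_apply i).aemeasurable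
      Measurable.of_discrete.aestronglyMeasurable, (measurePreserving_eval _ i).map_eq]
  have hindep : iIndepFun (fun i (y : Fin r → β) ↦ f (y i)) μ :=
    hμ ▸ iIndepFun_pi fun _ ↦ Measurable.of_discrete.aemeasurable
  have hHoeffding := measureReal_abs_sum_sub_integral_ge_le_of_iIndepFun hindep
    (fun _ ↦ Measurable.of_discrete.aemeasurable) (fun i ↦ ae_of_all _ fun y ↦ hf (y i)) univ ht
  simp only [hmean, sum_sub_distrib, sum_const, card_univ, Fintype.card_fin, nsmul_eq_mul]
    at hHoeffding
  rw [← coe_filter_univ, measureReal_uniformOn_univ, Fintype.card_fun, Fintype.card_fin,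
    Nat.cast_pow, div_le_iff₀ (by positivity)] at hHoeffding
  linarith

theorem card_abs_rescaled_sum_sub_ge_le {β : Type*} [Fintype β] [Nonempty β] {r : ℕ} (hr : 0 < r)
    (f : β → ℝ) {D : ℝ} (hf : ∀ x, f x ∈ Set.Icc 0 D) {M ε : ℝ} (hsum : ∑ x, f x = 2 * M)
    (hMε : 0 ≤ M * ε) :
    (#{y : Fin r → β | M * ε ≤ |Fintype.card β / (2 * r) * ∑ i, f (y i) - M|} : ℝ) /
        Fintype.card β ^ r ≤
      2 * exp (-(8 * r * (M * ε) ^ 2 / (Fintype.card β * D) ^ 2)) := by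
  set n : ℝ := (Fintype.card β : ℝ)
  have hn : 0 < n := by positivity
  set t : ℝ := 2 * r * (M * ε) / n
  have hevent (y : Fin r → β) (hy : M * ε ≤ |n / (2 * r) * ∑ i, f (y i) - M|) :
      t ≤ |∑ i, f (y i) - r * ((∑ x, f x) / n)| := by
    have hscale : ∑ i, f (y i) - r * ((∑ x, f x) / n) =
        2 * r / n * (n / (2 * r) * ∑ i, f (y i) - M) := by
      rw [hsum]; field_simp
    rw [hscale, abs_mul, abs_of_pos (by positivity)]
    calc t = 2 * r / n * (M * ε) := by ring
      _ ≤ _ := by gcongr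
  have hHoeffding := card_abs_sum_sub_mean_ge_le r f hf (t := t) (by positivity)
  have hexponent : -2 * t ^ 2 / (r * (D - 0) ^ 2) = -(8 * r * (M * ε) ^ 2 / (n * D) ^ 2) := by
    simp only [t]; field_simp; ring
  rw [hexponent] at hHoeffding
  rw [div_le_iff₀ (by positivity)]
  calc _ ≤ (#{y : Fin r → β | t ≤ |∑ i, f (y i) - r * ((∑ x, f x) / n)|} : ℝ) :=
        Nat.cast_le.2 (card_le_card (monotone_filter_right _ fun y _ ↦ hevent y))
    _ ≤ _ := by linarith

theorem sum_card_filter_mem_eq_sum_card {β ι : Type*} [Fintype β] [DecidableEq β] [Fintype ι]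
    (J : ι → Finset β) : ∑ b, #{j | b ∈ J j} = ∑ j, #(J j) := by
  simp only [card_filter]
  rw [sum_comm]
  simp

/-- **Theorem 7 (concentration bound of MoCHy-A⁺ for open h-motifs).**
`β` is the finite hyperwedge set `Λ` (with `|Λ| ≥ 1`), `J 1, …, J M` (`M ≥ 1`)
are 2-element subsets of `Λ`, and every element of `Λ` belongs to at most
`D ≥ 1` of them.  The `r` i.i.d. uniform samples are encoded by the uniform
distribution on `Fin r → β`, and the probability of the deviation event is the
number of sample vectors realizing it divided by `|Λ|^r`.  If
`r > (1/(8ε²)) · (|Λ|·D/M)² · log(2/δ)`, then `Pr(|M̂ − M| ≥ M·ε) ≤ δ`. -/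
theorem mochyAplus_concentration_open {β : Type*} [Fintype β] [DecidableEq β] [Nonempty β]
    {M r D : ℕ} (hM : 1 ≤ M) (hD : 1 ≤ D)
    (J : Fin M → Finset β) (hcard : ∀ j, (J j).card = 2)
    (hdeg : ∀ b : β, (Finset.univ.filter fun j => b ∈ J j).card ≤ D)
    (ε δ : ℝ) (hε : 0 < ε) (hδ : 0 < δ)
    (hr : (r : ℝ) >
      1 / (8 * ε ^ 2) * ((Fintype.card β : ℝ) * D / M) ^ 2 * Real.log (2 / δ)) :
    ((Finset.univ.filter fun y : Fin r → β =>
        |((Fintype.card β : ℝ) / (2 * r)) *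
            (∑ i : Fin r, ∑ j : Fin M, if y i ∈ J j then (1 : ℝ) else 0) - M|
          ≥ M * ε).card : ℝ)
      / (Fintype.card β : ℝ) ^ r ≤ δ := by
  rcases le_or_gt 1 δ with hδ1 | hδ1
  · refine le_trans ?_ hδ1
    rw [div_le_one (by positivity)]
    exact_mod_cast (card_filter_le _ _).trans_eq (by simp)
  have hr_pos : (0 : ℝ) < r :=
    lt_of_le_of_lt (mul_nonneg (by positivity) (log_nonneg (by rw [le_div_iff₀ hδ]; linarith))) hr
  set deg : β → ℝ := fun b ↦ #{j | b ∈ J j}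
  have hdeg_sum : ∑ b, deg b = 2 * M := by
    have hcount : ∑ b, #{j | b ∈ J j} = 2 * M := by
      rw [sum_card_filter_mem_eq_sum_card]; simp [hcard, mul_comm]
    simp only [deg]; exact_mod_cast hcount
  have hdeg_mem (b : β) : deg b ∈ Set.Icc 0 (D : ℝ) := ⟨by positivity, Nat.cast_le.2 (hdeg b)⟩
  calc _ ≤ 2 * exp (-(8 * r * (M * ε) ^ 2 / (Fintype.card β * D) ^ 2)) := by
        simpa only [sum_boole, ge_iff_le] using card_abs_rescaled_sum_sub_ge_le
          (Nat.cast_pos.1 hr_pos) deg hdeg_mem hdeg_sum (by positivity)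
    _ ≤ δ := by
        refine two_mul_exp_neg_le hδ ?_
        rw [show 8 * r * (M * ε) ^ 2 / (Fintype.card β * D) ^ 2 =
          r / (1 / (8 * ε ^ 2) * ((Fintype.card β : ℝ) * D / M) ^ 2) by field_simp,
          le_div_iff₀ (by positivity)]
        linarith
end
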